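/- (Deterministic form of Lemma 2.4, alternative case.) Let β > 0, r ≥ 1, γ ≠ 0, and let (z_n) be a sequence of reals with z_n/√n → γ. Then liminf_{n→∞} (1/n) log BF₁₀(z_n | βn, r) ≥ γ²/2; in particular, for every 0 < c < γ²/2 one has BF₀₁(z_n | βn, r) = 1/BF₁₀(z_n | βn, r) ≤ exp(−cn) for all sufficiently large n, so BF₀₁(z_n|βn,r) → 0. -/

import Mathlib

open Real MeasureTheory Filter

/-- Rising factorial (Pochhammer symbol) `(a)_k`. -/
noncomputable def risingFac (a : ℝ) (k : ℕ) : ℝ := (ascPochhammer ℝ k).eval a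

/-- Confluent hypergeometric function `₁F₁(a, b; x)`. -/
noncomputable def oneF1 (a b x : ℝ) : ℝ :=
  ∑' k : ℕ, (risingFac a k / risingFac b k) * x ^ k / (Nat.factorial k : ℝ)

/-- Two-sided `z` Bayes factor `BF₁₀(z | τ², r)` as a function of `τ² = τsq`. -/
noncomputable def BF10z (z τsq r : ℝ) : ℝ :=
  (1 + τsq) ^ (-(r + 1 / 2)) *
    oneF1 (r + 1 / 2) (1 / 2) (τsq * z ^ 2 / (2 * (1 + τsq)))

/-!
For `0 < b ≤ a` the ratio `(a)_k / (b)_k` lies between `1` and `(a / b)^k`, so comparing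
`₁F₁(a, b; x)` termwise with the exponential series gives `eˣ ≤ ₁F₁(a, b; x) ≤ e^{(a/b) x}`.
Hence `log BF₁₀(z | τ², r)` is `-(r + 1/2) log (1 + τ²)` plus a quantity between `x` and
`(2r + 1) x`, where `x = τ² z² / (2 (1 + τ²))`. With `τ² = β n` the logarithmic term is `o(n)`
and `x / n → γ² / 2`, which gives the liminf bound, the exponential decay of `BF₀₁`, and its
convergence to `0`. The upper bound is needed only because `liminf` on `ℝ` takes a junk value
for sequences that are not bounded above.
-/

open scoped Nat Topology

lemma risingFac_succ (a : ℝ) (k : ℕ) : risingFac a (k + 1) = risingFac a k * (a + k) :=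
  ascPochhammer_succ_eval k a

lemma risingFac_pos {a : ℝ} (ha : 0 < a) (k : ℕ) : 0 < risingFac a k := by
  induction k with
  | zero => simp [risingFac]
  | succ k ih => rw [risingFac_succ]; exact mul_pos ih (by positivity)

lemma risingFac_le_risingFac {a b : ℝ} (hb : 0 < b) (hba : b ≤ a) (k : ℕ) :
    risingFac b k ≤ risingFac a k := by
  induction k with
  | zero => simp [risingFac]
  | succ k ih =>
    rw [risingFac_succ, risingFac_succ]
    exact mul_le_mul ih (by linarith) (by positivity) ((risingFac_pos hb k).le.trans ih)

lemma risingFac_le_pow_mul_risingFac {a b : ℝ} (hb : 0 < b) (hba : b ≤ a) (k : ℕ) :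
    risingFac a k ≤ (a / b) ^ k * risingFac b k := by
  have ha : 0 < a := hb.trans_le hba
  induction k with
  | zero => simp [risingFac]
  | succ k ih =>
    have hstep : a + k ≤ a / b * (b + k) := by
      rw [div_mul_eq_mul_div, le_div_iff₀ hb]
      nlinarith [Nat.cast_nonneg (α := ℝ) k]
    rw [risingFac_succ, risingFac_succ, pow_succ]
    calc risingFac a k * (a + k)
        ≤ (a / b) ^ k * risingFac b k * (a / b * (b + k)) :=
          mul_le_mul ih hstep (by positivity) (by have := risingFac_pos hb k; positivity)
      _ = _ := by ring

lemma one_le_risingFac_div {a b : ℝ} (hb : 0 < b) (hba : b ≤ a) (k : ℕ) :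
    1 ≤ risingFac a k / risingFac b k :=
  (one_le_div (risingFac_pos hb k)).2 (risingFac_le_risingFac hb hba k)

lemma risingFac_div_le_pow {a b : ℝ} (hb : 0 < b) (hba : b ≤ a) (k : ℕ) :
    risingFac a k / risingFac b k ≤ (a / b) ^ k :=
  (div_le_iff₀ (risingFac_pos hb k)).2 (risingFac_le_pow_mul_risingFac hb hba k)

section oneF1

variable {a b x : ℝ}

lemma oneF1_term_bounds (hb : 0 < b) (hba : b ≤ a) (hx : 0 ≤ x) (k : ℕ) :
    x ^ k / k ! ≤ risingFac a k / risingFac b k * x ^ k / k ! ∧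
      risingFac a k / risingFac b k * x ^ k / k ! ≤ (a / b * x) ^ k / k ! := by
  refine ⟨div_le_div_of_nonneg_right ?_ (by positivity),
    div_le_div_of_nonneg_right ?_ (by positivity)⟩
  · exact le_mul_of_one_le_left (pow_nonneg hx k) (one_le_risingFac_div hb hba k)
  · rw [mul_pow]
    exact mul_le_mul_of_nonneg_right (risingFac_div_le_pow hb hba k) (pow_nonneg hx k)

lemma summable_oneF1 (hb : 0 < b) (hba : b ≤ a) (hx : 0 ≤ x) :
    Summable fun k : ℕ => risingFac a k / risingFac b k * x ^ k / k ! :=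
  (Real.summable_pow_div_factorial (a / b * x)).of_nonneg_of_le
    (fun k => (by positivity : (0 : ℝ) ≤ x ^ k / k !).trans (oneF1_term_bounds hb hba hx k).1)
    (fun k => (oneF1_term_bounds hb hba hx k).2)

lemma exp_eq_tsum_pow_div_factorial (x : ℝ) : exp x = ∑' k : ℕ, x ^ k / k ! := by
  rw [Real.exp_eq_exp_ℝ, NormedSpace.exp_eq_tsum_div]

lemma exp_le_oneF1 (hb : 0 < b) (hba : b ≤ a) (hx : 0 ≤ x) : exp x ≤ oneF1 a b x := by
  rw [exp_eq_tsum_pow_div_factorial, oneF1]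
  exact (Real.summable_pow_div_factorial x).tsum_le_tsum
    (fun k => (oneF1_term_bounds hb hba hx k).1) (summable_oneF1 hb hba hx)

lemma oneF1_le_exp (hb : 0 < b) (hba : b ≤ a) (hx : 0 ≤ x) : oneF1 a b x ≤ exp (a / b * x) := by
  rw [exp_eq_tsum_pow_div_factorial, oneF1]
  exact (summable_oneF1 hb hba hx).tsum_le_tsum
    (fun k => (oneF1_term_bounds hb hba hx k).2) (Real.summable_pow_div_factorial _)

lemma oneF1_pos (hb : 0 < b) (hba : b ≤ a) (hx : 0 ≤ x) : 0 < oneF1 a b x :=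
  (exp_pos x).trans_le (exp_le_oneF1 hb hba hx)

end oneF1

section BF10z

variable {z τsq r : ℝ}

lemma log_BF10z (hτ : 0 ≤ τsq) (hr : 0 ≤ r) :
    log (BF10z z τsq r) = -(r + 1 / 2) * log (1 + τsq) +
      log (oneF1 (r + 1 / 2) (1 / 2) (τsq * z ^ 2 / (2 * (1 + τsq)))) := by
  have hF := oneF1_pos (a := r + 1 / 2) (x := τsq * z ^ 2 / (2 * (1 + τsq)))
    one_half_pos (by linarith) (by positivity)
  rw [BF10z, log_mul (rpow_pos_of_pos (by linarith) _).ne' hF.ne', log_rpow (by linarith)]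

lemma BF10z_pos (hτ : 0 ≤ τsq) (hr : 0 ≤ r) : 0 < BF10z z τsq r :=
  mul_pos (rpow_pos_of_pos (by linarith) _)
    (oneF1_pos one_half_pos (by linarith) (by positivity))

lemma log_BF10z_ge (hτ : 0 ≤ τsq) (hr : 0 ≤ r) :
    -(r + 1 / 2) * log (1 + τsq) + τsq * z ^ 2 / (2 * (1 + τsq)) ≤ log (BF10z z τsq r) := by
  rw [log_BF10z hτ hr, add_le_add_iff_left,
    le_log_iff_exp_le (oneF1_pos one_half_pos (by linarith) (by positivity))]
  exact exp_le_oneF1 one_half_pos (by linarith) (by positivity)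

lemma log_BF10z_le (hτ : 0 ≤ τsq) (hr : 0 ≤ r) :
    log (BF10z z τsq r) ≤
      -(r + 1 / 2) * log (1 + τsq) + (2 * r + 1) * (τsq * z ^ 2 / (2 * (1 + τsq))) := by
  rw [log_BF10z hτ hr, add_le_add_iff_left,
    log_le_iff_le_exp (oneF1_pos one_half_pos (by linarith) (by positivity))]
  have h := oneF1_le_exp (a := r + 1 / 2) (x := τsq * z ^ 2 / (2 * (1 + τsq)))
    one_half_pos (by linarith) (by positivity)
  rwa [show (r + 1 / 2) / (1 / 2) = 2 * r + 1 by ring] at h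

end BF10z

lemma tendsto_log_one_add_mul_div_atTop {β : ℝ} (hβ : 0 < β) :
    Tendsto (fun n : ℕ => log (1 + β * n) / n) atTop (𝓝 0) := by
  have hlog := tendsto_pow_log_div_mul_add_atTop β⁻¹ (-β⁻¹) 1 (inv_ne_zero hβ.ne')
  have hlin : Tendsto (fun n : ℕ => 1 + β * n) atTop atTop :=
    tendsto_atTop_add_const_left _ _ (tendsto_natCast_atTop_atTop.const_mul_atTop hβ)
  refine (hlog.comp hlin).congr fun n => ?_
  simp only [Function.comp_apply, pow_one]
  congr 1
  field_simp
  ring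

lemma tendsto_BF10z_log_bound_div {β r γ : ℝ} (hβ : 0 < β) {z : ℕ → ℝ}
    (hz : Tendsto (fun n : ℕ => z n / √n) atTop (𝓝 γ)) (κ : ℝ) :
    Tendsto (fun n : ℕ => (-(r + 1 / 2) * log (1 + β * n) +
      κ * (β * n * z n ^ 2 / (2 * (1 + β * n)))) / n) atTop (𝓝 (κ * (γ ^ 2 / 2))) := by
  have hfactor : Tendsto (fun n : ℕ => β / (2 * ((n : ℝ)⁻¹ + β))) atTop (𝓝 (β / (2 * (0 + β)))) :=
    tendsto_const_nhds.div ((tendsto_inv_atTop_zero.comp tendsto_natCast_atTop_atTop).add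
      tendsto_const_nhds |>.const_mul 2) (by positivity)
  have hsum := ((tendsto_log_one_add_mul_div_atTop hβ).const_mul (-(r + 1 / 2))).add
    (((hz.pow 2).mul hfactor).const_mul κ)
  rw [zero_add, mul_zero, zero_add, show β / (2 * β) = 1 / 2 by field_simp, mul_one_div] at hsum
  refine hsum.congr' ?_
  filter_upwards [eventually_gt_atTop 0] with n hn
  have hn' : (0 : ℝ) < n := Nat.cast_pos.2 hn
  rw [div_pow, sq_sqrt hn'.le]
  field_simp

lemma le_liminf_of_tendsto_of_eventuallyLE {α : Type*} {l : Filter α} [l.NeBot] {f g : α → ℝ}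
    {a : ℝ} (hg : Tendsto g l (𝓝 a)) (hgf : g ≤ᶠ[l] f) (hf : IsBoundedUnder (· ≤ ·) l f) :
    a ≤ liminf f l :=
  hg.liminf_eq ▸ liminf_le_liminf hgf hg.isBoundedUnder_ge hf.isCoboundedUnder_ge

lemma one_div_le_exp_neg_mul_of_mul_le_log {B c t : ℝ} (hB : 0 < B) (h : c * t ≤ log B) :
    1 / B ≤ exp (-c * t) := by
  rw [one_div, ← exp_log hB, ← exp_neg]
  exact exp_le_exp.2 (by linarith)

lemma tendsto_exp_neg_mul_natCast {c : ℝ} (hc : 0 < c) :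
    Tendsto (fun n : ℕ => exp (-c * n)) atTop (𝓝 0) :=
  tendsto_exp_atBot.comp (tendsto_natCast_atTop_atTop.const_mul_atTop_of_neg (neg_neg_of_pos hc))

/-- Deterministic form of Lemma 2.4, alternative case. -/
theorem lemma24_alternative (β r γ : ℝ) (hβ : 0 < β) (hr : 1 ≤ r) (hγ : γ ≠ 0)
    (z : ℕ → ℝ)
    (hz : Tendsto (fun n : ℕ => z n / Real.sqrt n) atTop (nhds γ)) :
    γ ^ 2 / 2 ≤
        Filter.liminf (fun n : ℕ => (1 / (n : ℝ)) * Real.log (BF10z (z n) (β * n) r)) atTop ∧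
    (∀ c : ℝ, 0 < c → c < γ ^ 2 / 2 →
      ∀ᶠ n : ℕ in atTop, 1 / BF10z (z n) (β * n) r ≤ Real.exp (-c * n)) ∧
    Tendsto (fun n : ℕ => 1 / BF10z (z n) (β * n) r) atTop (nhds 0) := by
  have hr₀ : 0 ≤ r := by linarith
  have hτ (n : ℕ) : 0 ≤ β * n := by positivity
  have hlower := tendsto_BF10z_log_bound_div (r := r) hβ hz 1
  have hupper := tendsto_BF10z_log_bound_div (r := r) hβ hz (2 * r + 1)
  simp only [one_mul] at hlower
  have hlower_le (n : ℕ) := div_le_div_of_nonneg_right (log_BF10z_ge (z := z n) (hτ n) hr₀)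
    n.cast_nonneg
  have hupper_le (n : ℕ) := div_le_div_of_nonneg_right (log_BF10z_le (z := z n) (hτ n) hr₀)
    n.cast_nonneg
  have hdecay (c : ℝ) (_ : 0 < c) (hcγ : c < γ ^ 2 / 2) :
      ∀ᶠ n : ℕ in atTop, 1 / BF10z (z n) (β * n) r ≤ exp (-c * n) := by
    filter_upwards [hlower.eventually_const_lt hcγ, eventually_gt_atTop 0] with n hn hn₀
    refine one_div_le_exp_neg_mul_of_mul_le_log (BF10z_pos (hτ n) hr₀) ?_
    exact ((lt_div_iff₀ (Nat.cast_pos.2 hn₀)).1 (hn.trans_le (hlower_le n))).le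
  refine ⟨?_, hdecay, ?_⟩
  · simp_rw [one_div_mul_eq_div]
    exact le_liminf_of_tendsto_of_eventuallyLE hlower (.of_forall hlower_le)
      (hupper.isBoundedUnder_le.mono_le (.of_forall hupper_le))
  · have hc : 0 < γ ^ 2 / 4 := by positivity
    exact tendsto_of_tendsto_of_tendsto_of_le_of_le' tendsto_const_nhds
      (tendsto_exp_neg_mul_natCast hc)
      (.of_forall fun n => (one_div_pos.2 (BF10z_pos (hτ n) hr₀)).le)
      (hdecay _ hc (by linarith))
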